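/- arXiv:2604.17445 — 5 statements merged into one kernel-verified Lean document; each statement's English description precedes it below -/
import Mathlib

section
/- If (x, y, z) is a positive integer solution to the k-Markov equation x² + y² + z² + k(xy + xz + yz) = (3+3k)xyz, then (x, (3+3k)xy − z − k(x+y), y) is also a positive integer solution. -/
/-- If (x, y, z) is a positive integer solution to the k-Markov equation,
then (x, (3+3k)xy − z − k(x+y), y) is also a positive integer solution. -/
theorem stmt_0 (k : ℕ) (x y z : ℤ) (hx : 0 < x) (hy : 0 < y) (hz : 0 < z)
    (h : x ^ 2 + y ^ 2 + z ^ 2 + (k : ℤ) * (x * y + x * z + y * z) =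
      (3 + 3 * (k : ℤ)) * (x * y * z)) :
    0 < (3 + 3 * (k : ℤ)) * x * y - z - (k : ℤ) * (x + y) ∧
      x ^ 2 + ((3 + 3 * (k : ℤ)) * x * y - z - (k : ℤ) * (x + y)) ^ 2 + y ^ 2 +
          (k : ℤ) * (x * ((3 + 3 * (k : ℤ)) * x * y - z - (k : ℤ) * (x + y)) + x * y +
            ((3 + 3 * (k : ℤ)) * x * y - z - (k : ℤ) * (x + y)) * y) =
        (3 + 3 * (k : ℤ)) * (x * ((3 + 3 * (k : ℤ)) * x * y - z - (k : ℤ) * (x + y)) * y) := by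
  have hk : (0 : ℤ) ≤ (k : ℤ) := Int.natCast_nonneg k
  have hzw : z * ((3 + 3 * (k : ℤ)) * x * y - z - (k : ℤ) * (x + y)) =
      x ^ 2 + y ^ 2 + (k : ℤ) * x * y := by linear_combination -h
  constructor
  · nlinarith [mul_pos hx hy, sq_nonneg x, sq_nonneg y]
  · linear_combination h
end

section
/- Let k ≥ 0 and define the sequence f by f₀ = 1, f₁ = k+2, and fₙ = (2k+3)fₙ₋₁ − fₙ₋₂ − k for n ≥ 2. Then for all n ≥ 2, fₙ · fₙ₋₂ = fₙ₋₁² + k·fₙ₋₁ + 1. -/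
/-- The k-Fibonacci-type sequence f satisfies fₙ·fₙ₋₂ = fₙ₋₁² + k·fₙ₋₁ + 1 for n ≥ 2. -/
theorem stmt_3 (k : ℕ) (f : ℕ → ℤ) (h0 : f 0 = 1) (h1 : f 1 = (k : ℤ) + 2)
    (hrec : ∀ n, 2 ≤ n → f n = (2 * (k : ℤ) + 3) * f (n - 1) - f (n - 2) - (k : ℤ)) :
    ∀ n, 2 ≤ n → f n * f (n - 2) = f (n - 1) ^ 2 + (k : ℤ) * f (n - 1) + 1 := by
  intro n hn
  induction n with
  | zero => omega
  | succ m ih =>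
    rcases Nat.lt_or_ge m 2 with hm | hm
    · interval_cases m
      · omega
      · have h2 := hrec 2 (by norm_num)
        norm_num at h2 ⊢
        rw [h0, h1] at *
        nlinarith [h2]
    · have ihm := ih hm
      have hr := hrec (m + 1) (by omega)
      have hrm := hrec m hm
      have e1 : m + 1 - 1 = m := rfl
      have e2 : m + 1 - 2 = m - 1 := rfl
      rw [e1, e2] at hr ⊢
      rw [hr]
      linear_combination ihm - f m * hrm
end

section
/- Let k ≥ 0 and let a, b be sequences defined by: a₀ = 0, a₁ = 1, aₙ = (2k+3)aₙ₋₁ − aₙ₋₂; and f₀ = 1, f₁ = k+2, fₙ = (2k+3)fₙ₋₁ − fₙ₋₂ − k. Define c₀ = 1 and cₙ = (k+1)aₙ + cₙ₋₁ for n ≥ 1. Then cₙ = fₙ for all n ≥ 0. -/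
/-- Intertwining identity m^{(k)}_{(n,1)} = (k+1)·m^{(k)}_{(n,0)} + m^{(k)}_{(n−1,1)}. -/
theorem stmt_6 (k : ℕ) (a f c : ℕ → ℤ)
    (ha0 : a 0 = 0) (ha1 : a 1 = 1)
    (harec : ∀ n, 2 ≤ n → a n = (2 * (k : ℤ) + 3) * a (n - 1) - a (n - 2))
    (hf0 : f 0 = 1) (hf1 : f 1 = (k : ℤ) + 2)
    (hfrec : ∀ n, 2 ≤ n → f n = (2 * (k : ℤ) + 3) * f (n - 1) - f (n - 2) - (k : ℤ))
    (hc0 : c 0 = 1)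
    (hcrec : ∀ n, 1 ≤ n → c n = ((k : ℤ) + 1) * a n + c (n - 1)) :
    ∀ n, c n = f n := by
  have aux : ∀ n : ℕ, ((k : ℤ) + 1) * a (n + 1) = f (n + 1) - f n := by
    intro n
    induction n using Nat.twoStepInduction with
    | zero => rw [ha1, hf1, hf0]; ring
    | one =>
      have h2 := harec 2 (by norm_num)
      have hg2 := hfrec 2 (by norm_num)
      norm_num at h2 hg2
      rw [h2, hg2, ha0, ha1, hf0, hf1]; ring
    | more n ih1 ih2 =>
      have h3 := harec (n + 3) (by omega)
      have hg3 := hfrec (n + 3) (by omega)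
      have hg2 := hfrec (n + 2) (by omega)
      simp only [Nat.add_sub_cancel, show n + 3 - 1 = n + 2 by omega,
        show n + 3 - 2 = n + 1 by omega, show n + 2 - 1 = n + 1 by omega,
        show n + 2 - 2 = n by omega] at h3 hg3 hg2
      simp only [show n + 1 + 1 = n + 2 by omega, show n + 2 + 1 = n + 3 by omega] at ih2 ⊢
      linear_combination ((k : ℤ) + 1) * h3 + (2 * (k : ℤ) + 3) * ih2 - ih1 - hg3 + hg2
  intro n
  induction n with
  | zero => rw [hc0, hf0]
  | succ n ih =>
    have h := hcrec (n + 1) (by omega)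
    simp only [Nat.add_sub_cancel] at h
    have := aux n
    linarith
end

section
/- Let k ≥ 0 and define b₀ = 0, b₁ = k+2, bₙ = (3k² + 8k + 6)bₙ₋₁ − bₙ₋₂; and g defined by the Pell-type recurrence g₀ = 1, g₁ = 2k²+6k+5, gₙ = (3k²+8k+6)gₙ₋₁ − gₙ₋₂ − k(k+2). Define d₀ = 1 and dₙ = 2(k+1)bₙ + dₙ₋₁ for n ≥ 1. Then dₙ = gₙ for all n ≥ 0. -/
/-- Intertwining identity m^{(k)}_{(n+1,n)} = 2(k+1)·m^{(k)}_{(n,n)} + m^{(k)}_{(n,n−1)}. -/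
theorem stmt_7 (k : ℕ) (b g d : ℕ → ℤ)
    (hb0 : b 0 = 0) (hb1 : b 1 = (k : ℤ) + 2)
    (hbrec : ∀ n, 2 ≤ n → b n = (3 * (k : ℤ) ^ 2 + 8 * k + 6) * b (n - 1) - b (n - 2))
    (hg0 : g 0 = 1) (hg1 : g 1 = 2 * (k : ℤ) ^ 2 + 6 * k + 5)
    (hgrec : ∀ n, 2 ≤ n →
      g n = (3 * (k : ℤ) ^ 2 + 8 * k + 6) * g (n - 1) - g (n - 2) - (k : ℤ) * (k + 2))
    (hd0 : d 0 = 1)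
    (hdrec : ∀ n, 1 ≤ n → d n = 2 * ((k : ℤ) + 1) * b n + d (n - 1)) :
    ∀ n, d n = g n := by
  have key : ∀ n, g (n + 1) - g n = 2 * ((k : ℤ) + 1) * b (n + 1) := by
    intro n
    induction n using Nat.strong_induction_on with
    | _ n ih =>
      match n with
      | 0 =>
        rw [hg1, hg0, hb1]; ring
      | 1 =>
        have h2 := hgrec 2 (by norm_num)
        have hb2 := hbrec 2 (by norm_num)
        norm_num at h2 hb2
        rw [h2, hb2, hg1, hg0, hb1, hb0]; ring
      | (m + 2) =>
        have h3 := hgrec (m + 3) (by omega)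
        have h2 := hgrec (m + 2) (by omega)
        have hb3 := hbrec (m + 3) (by omega)
        have e2 := ih (m + 1) (by omega)
        have e1 := ih m (by omega)
        have s3 : m + 3 - 1 = m + 2 := by omega
        have s3' : m + 3 - 2 = m + 1 := by omega
        have s2 : m + 2 - 1 = m + 1 := by omega
        have s2' : m + 2 - 2 = m := by omega
        rw [s3, s3'] at h3 hb3
        rw [s2, s2'] at h2
        have : m + 2 + 1 = m + 3 := by omega
        rw [this, h3, hb3]
        linear_combination (3 * (k : ℤ) ^ 2 + 8 * k + 6) * e2 - e1 - h2
  intro n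
  induction n with
  | zero => rw [hd0, hg0]
  | succ m ihm =>
    have hd := hdrec (m + 1) (by omega)
    norm_num at hd
    rw [hd, ihm]
    linear_combination -key m
end

section
/- Let k ≥ 0 and define f₀ = 1, f₁ = k+2, fₙ = (2k+3)fₙ₋₁ − fₙ₋₂ − k for n ≥ 2. Then the sequence (fₙ) is strictly increasing, and moreover fₙ₊₁·fₙ₋₁ − fₙ² = k·fₙ + 1 > 0 for all n ≥ 1, so the ratio fₙ₊₁/fₙ is strictly increasing. -/
/-- The k-Fibonacci-type sequence is strictly increasing, satisfies
fₙ₊₁·fₙ₋₁ − fₙ² = k·fₙ + 1 > 0, and its consecutive ratios are strictly increasing. -/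
theorem stmt_15 (k : ℕ) (f : ℕ → ℤ) (h0 : f 0 = 1) (h1 : f 1 = (k : ℤ) + 2)
    (hrec : ∀ n, 2 ≤ n → f n = (2 * (k : ℤ) + 3) * f (n - 1) - f (n - 2) - (k : ℤ)) :
    StrictMono f ∧
      (∀ n, 1 ≤ n → f (n + 1) * f (n - 1) - f n ^ 2 = (k : ℤ) * f n + 1 ∧
        (0 : ℤ) < (k : ℤ) * f n + 1) ∧
      (∀ n, 1 ≤ n → (f n : ℝ) / (f (n - 1) : ℝ) < (f (n + 1) : ℝ) / (f n : ℝ)) := by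
  have hk : (0 : ℤ) ≤ (k : ℤ) := Int.natCast_nonneg k
  -- positivity and step monotonicity
  have key : ∀ n, 1 ≤ f n ∧ f n < f (n + 1) := by
    intro n
    induction n with
    | zero => constructor <;> [rw [h0]; rw [h0, h1]] <;> linarith
    | succ m ih =>
      have hr : f (m + 2) = (2 * (k : ℤ) + 3) * f (m + 1) - f m - (k : ℤ) :=
        hrec (m + 2) (by omega)
      obtain ⟨h1m, h2m⟩ := ih
      constructor
      · linarith
      · nlinarith [mul_nonneg hk (show (0:ℤ) ≤ f (m+1) - 1 by linarith)]
  -- identity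
  have hid : ∀ n, f (n + 2) * f n - f (n + 1) ^ 2 = (k : ℤ) * f (n + 1) + 1 := by
    intro n
    induction n with
    | zero =>
      have hr : f 2 = (2 * (k : ℤ) + 3) * f 1 - f 0 - (k : ℤ) := hrec 2 (by omega)
      rw [hr, h0, h1]; ring
    | succ m ih =>
      have hr2 : f (m + 2) = (2 * (k : ℤ) + 3) * f (m + 1) - f m - (k : ℤ) :=
        hrec (m + 2) (by omega)
      have hr3 : f (m + 3) = (2 * (k : ℤ) + 3) * f (m + 2) - f (m + 1) - (k : ℤ) :=
        hrec (m + 3) (by omega)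
      linear_combination f (m + 1) * hr3 - f (m + 2) * hr2 + ih
  refine ⟨strictMono_nat_of_lt_succ fun n => (key n).2, ?_, ?_⟩
  · intro n hn
    obtain ⟨m, rfl⟩ := Nat.exists_eq_add_of_le hn
    have h1m := (key (1 + m)).1
    constructor
    · have := hid m
      have : f (1 + m + 1) * f (1 + m - 1) - f (1 + m) ^ 2 = (k:ℤ) * f (1 + m) + 1 := by
        have e1 : 1 + m + 1 = m + 2 := by omega
        have e2 : 1 + m - 1 = m := by omega
        have e3 : 1 + m = m + 1 := by omega
        rw [e1, e2, e3]; exact hid m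
      exact this
    · nlinarith [mul_nonneg hk (show (0:ℤ) ≤ f (1 + m) - 1 by linarith)]
  · intro n hn
    obtain ⟨m, rfl⟩ := Nat.exists_eq_add_of_le hn
    have e1 : 1 + m + 1 = m + 2 := by omega
    have e2 : 1 + m - 1 = m := by omega
    have e3 : 1 + m = m + 1 := by omega
    rw [e1, e2, e3]
    have hm : (0:ℤ) < f m := (key m).1
    have hm1 : (0:ℤ) < f (m + 1) := by have := (key m).2; linarith
    have hid' := hid m
    have hineq : f (m + 1) * f (m + 1) < f (m + 2) * f m := by
      nlinarith [mul_nonneg hk hm1.le]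
    rw [div_lt_div_iff₀ (by exact_mod_cast hm) (by exact_mod_cast hm1)]
    exact_mod_cast hineq
end
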